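/- arXiv:2204.09076 — 3 statements merged into one kernel-verified Lean document; each statement's English description precedes it below -/
import Mathlib

section
/- Let N = n² for an even positive integer n, and for 0 ≤ k, l < n/2 let k̃ = 2πk/n, l̃ = 2πl/n. Then the double sum over all pairs (k,l) with 1 ≤ k,l ≤ n/2 − 1 of 1/(1 − cos²(k̃)·cos²(l̃)) is Θ(N log N) as N → ∞. -/
open Real Filter Finset Asymptotics

/-!
For `n = 2m` the angles are `πk/m`. Writing `s = sin² θ`, `t = sin² φ ∈ [0, 1]`, the denominator
`1 - cos² θ cos² φ = s + t - st` lies between `(s + t)/2` and `s + t`. The reflection `k ↦ m - k`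
leaves every term unchanged, so up to a factor `4` the sum may be restricted to `1 ≤ k, l ≤ m/2`,
where Jordan's inequality `2x/π ≤ sin x ≤ x` makes each term comparable to `m² / (k² + l²)`.
Finally `∑_{k,l ≤ M} 1/(k² + l²)` lies between `H_M / 2` and `2 H_M`: row `k` is at least `1/(2k)`
(from the terms `l ≤ k`) and at most `2/k`, by telescoping against `2/((k+l-1)(k+l))`.
-/

lemma one_sub_cos_sq_mul_cos_sq_le (θ φ : ℝ) :
    1 - cos θ ^ 2 * cos φ ^ 2 ≤ sin θ ^ 2 + sin φ ^ 2 := by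
  rw [cos_sq', cos_sq']
  nlinarith [mul_nonneg (sq_nonneg (sin θ)) (sq_nonneg (sin φ))]

lemma sin_sq_add_sin_sq_le_two_mul (θ φ : ℝ) :
    sin θ ^ 2 + sin φ ^ 2 ≤ 2 * (1 - cos θ ^ 2 * cos φ ^ 2) := by
  rw [cos_sq', cos_sq']
  nlinarith [mul_nonneg (sq_nonneg (sin θ)) (sub_nonneg.2 (sin_sq_le_one φ)),
    mul_nonneg (sq_nonneg (sin φ)) (sub_nonneg.2 (sin_sq_le_one θ))]

lemma one_div_one_sub_cos_sq_mul_cos_sq_nonneg (θ φ : ℝ) :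
    0 ≤ 1 / (1 - cos θ ^ 2 * cos φ ^ 2) :=
  one_div_nonneg.2 <| sub_nonneg.2 <|
    mul_le_one₀ (cos_sq_le_one θ) (sq_nonneg _) (cos_sq_le_one φ)

lemma one_div_sq_add_sq_le_one_div_one_sub_cos_sq_mul_cos_sq {θ φ : ℝ}
    (h : 0 < sin θ ^ 2 + sin φ ^ 2) :
    1 / (θ ^ 2 + φ ^ 2) ≤ 1 / (1 - cos θ ^ 2 * cos φ ^ 2) := by
  have hpos : 0 < 1 - cos θ ^ 2 * cos φ ^ 2 := by
    linarith [sin_sq_add_sin_sq_le_two_mul θ φ]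
  exact one_div_le_one_div_of_le hpos <|
    (one_sub_cos_sq_mul_cos_sq_le θ φ).trans (add_le_add sin_sq_le_sq sin_sq_le_sq)

lemma sq_add_sq_le_sin_sq_add_sin_sq {θ φ : ℝ} (hθ : 0 ≤ θ) (hθ' : θ ≤ π / 2)
    (hφ : 0 ≤ φ) (hφ' : φ ≤ π / 2) :
    4 / π ^ 2 * (θ ^ 2 + φ ^ 2) ≤ sin θ ^ 2 + sin φ ^ 2 := by
  have jordan_sq {x : ℝ} (hx : 0 ≤ x) (hx' : x ≤ π / 2) : 4 / π ^ 2 * x ^ 2 ≤ sin x ^ 2 := by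
    calc 4 / π ^ 2 * x ^ 2 = (2 / π * x) ^ 2 := by ring
      _ ≤ sin x ^ 2 := pow_le_pow_left₀ (by positivity) (mul_le_sin hx hx') 2
  linarith [jordan_sq hθ hθ', jordan_sq hφ hφ']

lemma one_div_one_sub_cos_sq_mul_cos_sq_le {θ φ : ℝ} (hθ : 0 ≤ θ) (hθ' : θ ≤ π / 2)
    (hφ : 0 ≤ φ) (hφ' : φ ≤ π / 2) (h : 0 < θ ^ 2 + φ ^ 2) :
    1 / (1 - cos θ ^ 2 * cos φ ^ 2) ≤ π ^ 2 / 2 * (1 / (θ ^ 2 + φ ^ 2)) := by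
  have hsin := sq_add_sq_le_sin_sq_add_sin_sq hθ hθ' hφ hφ'
  have hgap := sin_sq_add_sin_sq_le_two_mul θ φ
  have hπ : 0 < π := pi_pos
  have hhalf : 4 / π ^ 2 * (θ ^ 2 + φ ^ 2) = 2 * (2 / π ^ 2 * (θ ^ 2 + φ ^ 2)) := by ring
  calc 1 / (1 - cos θ ^ 2 * cos φ ^ 2) ≤ 1 / (2 / π ^ 2 * (θ ^ 2 + φ ^ 2)) :=
        one_div_le_one_div_of_le (by positivity) (by linarith)
    _ = π ^ 2 / 2 * (1 / (θ ^ 2 + φ ^ 2)) := by field_simp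

lemma sum_Icc_le_two_mul_sum_Icc_half {m : ℕ} {g : ℕ → ℝ} (hg : ∀ k, 0 ≤ g k)
    (hsymm : ∀ k ≤ m, g (m - k) = g k) :
    ∑ k ∈ Icc 1 (m - 1), g k ≤ 2 * ∑ k ∈ Icc 1 (m / 2), g k := by
  set s := Icc 1 (m / 2)
  have hcover : Icc 1 (m - 1) ⊆ s ∪ s.image (m - ·) := by
    intro k hk
    simp only [s, mem_union, mem_Icc, mem_image] at hk ⊢
    by_cases h : k ≤ m / 2
    · exact .inl ⟨hk.1, h⟩
    · exact .inr ⟨m - k, by omega, by omega⟩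
  have hunion := sum_union_inter (s₁ := s) (s₂ := s.image (m - ·)) (f := g)
  have hinter : 0 ≤ ∑ k ∈ s ∩ s.image (m - ·), g k := sum_nonneg fun k _ => hg k
  have himage : ∑ k ∈ s.image (m - ·), g k ≤ ∑ k ∈ s, g k :=
    (sum_image_le_of_nonneg fun k _ => hg k).trans_eq <|
      sum_congr rfl fun k hk => hsymm k (by simp only [s, mem_Icc] at hk; omega)
  calc ∑ k ∈ Icc 1 (m - 1), g k ≤ ∑ k ∈ s ∪ s.image (m - ·), g k :=
        sum_le_sum_of_subset_of_nonneg hcover fun k _ _ => hg k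
    _ ≤ 2 * ∑ k ∈ s, g k := by linarith

lemma sum_Icc_inv_sq_add_sq_le {a : ℕ} (ha : 0 < a) (M : ℕ) :
    ∑ b ∈ Icc 1 M, ((a : ℝ) ^ 2 + (b : ℝ) ^ 2)⁻¹ ≤ 2 / a - 2 / (a + M) := by
  induction M with
  | zero => simp
  | succ M ih =>
    rw [sum_Icc_succ_top (by omega)]
    have hstep :
        ((a : ℝ) ^ 2 + ((M + 1 : ℕ) : ℝ) ^ 2)⁻¹ ≤ 2 / (a + M) - 2 / (a + (M + 1 : ℕ)) := by
      have hdiff :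
          2 / ((a : ℝ) + M) - 2 / (a + (M + 1 : ℕ)) = 2 / ((a + M) * (a + M + 1)) := by
        push_cast; field_simp; ring
      rw [hdiff, inv_eq_one_div, div_le_div_iff₀ (by positivity) (by positivity)]
      push_cast
      nlinarith [sq_nonneg ((a : ℝ) - (M + 1))]
    linarith

noncomputable def invSqNormSum (M : ℕ) : ℝ :=
  ∑ a ∈ Icc 1 M, ∑ b ∈ Icc 1 M, ((a : ℝ) ^ 2 + (b : ℝ) ^ 2)⁻¹

lemma invSqNormSum_le (M : ℕ) : invSqNormSum M ≤ 2 * (1 + log M) := by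
  have hrow : ∀ a ∈ Icc 1 M,
      ∑ b ∈ Icc 1 M, ((a : ℝ) ^ 2 + (b : ℝ) ^ 2)⁻¹ ≤ 2 * (a : ℝ)⁻¹ := by
    intro a ha
    have ha : 0 < a := (mem_Icc.1 ha).1
    exact (sum_Icc_inv_sq_add_sq_le ha M).trans <|
      (sub_le_self _ (by positivity)).trans_eq (div_eq_mul_inv _ _)
  calc invSqNormSum M ≤ ∑ a ∈ Icc 1 M, 2 * (a : ℝ)⁻¹ := sum_le_sum hrow
    _ = 2 * harmonic M := by rw [← mul_sum, harmonic_eq_sum_Icc]; push_cast; rfl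
    _ ≤ 2 * (1 + log M) := by gcongr; exact harmonic_le_one_add_log M

lemma log_add_one_le_two_mul_invSqNormSum (M : ℕ) : log (M + 1) ≤ 2 * invSqNormSum M := by
  have hrow : ∀ a ∈ Icc 1 M,
      (a : ℝ)⁻¹ ≤ 2 * ∑ b ∈ Icc 1 M, ((a : ℝ) ^ 2 + (b : ℝ) ^ 2)⁻¹ := by
    intro a ha
    obtain ⟨ha, haM⟩ := mem_Icc.1 ha
    have ha' : (0 : ℝ) < a := by exact_mod_cast ha
    calc (a : ℝ)⁻¹ = 2 * ∑ _b ∈ Icc 1 a, ((a : ℝ) ^ 2 + (a : ℝ) ^ 2)⁻¹ := by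
          rw [sum_const, Nat.card_Icc, nsmul_eq_mul, Nat.add_sub_cancel]
          field_simp
          norm_num
      _ ≤ 2 * ∑ b ∈ Icc 1 a, ((a : ℝ) ^ 2 + (b : ℝ) ^ 2)⁻¹ := by
          gcongr with b hb
          exact_mod_cast (mem_Icc.1 hb).2
      _ ≤ 2 * ∑ b ∈ Icc 1 M, ((a : ℝ) ^ 2 + (b : ℝ) ^ 2)⁻¹ := by
          gcongr
  calc log (M + 1) ≤ harmonic M := by exact_mod_cast log_add_one_le_harmonic M
    _ = ∑ a ∈ Icc 1 M, (a : ℝ)⁻¹ := by rw [harmonic_eq_sum_Icc]; push_cast; rfl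
    _ ≤ 2 * invSqNormSum M := (sum_le_sum hrow).trans_eq (mul_sum ..).symm

noncomputable def gapTerm (m k l : ℕ) : ℝ :=
  1 / (1 - cos (π * k / m) ^ 2 * cos (π * l / m) ^ 2)

noncomputable def gapSum (m : ℕ) : ℝ :=
  ∑ k ∈ Icc 1 (m - 1), ∑ l ∈ Icc 1 (m - 1), gapTerm m k l

lemma gapTerm_nonneg (m k l : ℕ) : 0 ≤ gapTerm m k l :=
  one_div_one_sub_cos_sq_mul_cos_sq_nonneg _ _

lemma gapSum_nonneg (m : ℕ) : 0 ≤ gapSum m :=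
  sum_nonneg fun k _ => sum_nonneg fun l _ => gapTerm_nonneg m k l

lemma cos_sq_pi_mul_sub_div {m k : ℕ} (hk : k ≤ m) :
    cos (π * (m - k : ℕ) / m) ^ 2 = cos (π * k / m) ^ 2 := by
  obtain rfl | hm := Nat.eq_zero_or_pos m
  · rw [Nat.le_zero.1 hk]
  have : π * (m - k : ℕ) / m = π - π * k / m := by
    rw [Nat.cast_sub hk]
    field_simp
  rw [this, cos_pi_sub, neg_sq]

lemma gapTerm_sub_left {m k : ℕ} (hk : k ≤ m) (l : ℕ) :
    gapTerm m (m - k) l = gapTerm m k l := by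
  rw [gapTerm, gapTerm, cos_sq_pi_mul_sub_div hk]

lemma gapTerm_sub_right (m k : ℕ) {l : ℕ} (hl : l ≤ m) :
    gapTerm m k (m - l) = gapTerm m k l := by
  rw [gapTerm, gapTerm, cos_sq_pi_mul_sub_div hl]

lemma pi_mul_div_mem_Ioc {m k : ℕ} (hk : k ∈ Icc 1 (m / 2)) :
    π * k / m ∈ Set.Ioc 0 (π / 2) := by
  obtain ⟨hk1, hkm⟩ := mem_Icc.1 hk
  have hk : (1 : ℝ) ≤ k := by exact_mod_cast hk1
  have hm : (2 * k : ℝ) ≤ m := by exact_mod_cast (by omega : 2 * k ≤ m)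
  have hπ := pi_pos
  refine ⟨div_pos (mul_pos hπ (by linarith)) (by linarith), ?_⟩
  rw [div_le_div_iff₀ (by linarith) two_pos]
  nlinarith

lemma sq_add_sq_pi_mul_div (m k l : ℕ) (hm : (m : ℝ) ≠ 0) :
    (π * k / m) ^ 2 + (π * l / m) ^ 2 = π ^ 2 / m ^ 2 * ((k : ℝ) ^ 2 + (l : ℝ) ^ 2) := by
  field_simp

lemma gapTerm_le {m k l : ℕ} (hk : k ∈ Icc 1 (m / 2)) (hl : l ∈ Icc 1 (m / 2)) :
    gapTerm m k l ≤ m ^ 2 / 2 * ((k : ℝ) ^ 2 + (l : ℝ) ^ 2)⁻¹ := by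
  obtain ⟨hθ, hθ'⟩ := pi_mul_div_mem_Ioc hk
  obtain ⟨hφ, hφ'⟩ := pi_mul_div_mem_Ioc hl
  have hm : (m : ℝ) ≠ 0 := by have := (mem_Icc.1 hk); norm_cast; omega
  have hπ := pi_pos
  calc gapTerm m k l ≤ π ^ 2 / 2 * (1 / ((π * k / m) ^ 2 + (π * l / m) ^ 2)) :=
        one_div_one_sub_cos_sq_mul_cos_sq_le hθ.le hθ' hφ.le hφ' (by positivity)
    _ = m ^ 2 / 2 * ((k : ℝ) ^ 2 + (l : ℝ) ^ 2)⁻¹ := by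
        rw [sq_add_sq_pi_mul_div m k l hm]
        field_simp

lemma le_gapTerm {m k : ℕ} (hk : k ∈ Icc 1 (m / 2)) (l : ℕ) :
    m ^ 2 / π ^ 2 * ((k : ℝ) ^ 2 + (l : ℝ) ^ 2)⁻¹ ≤ gapTerm m k l := by
  obtain ⟨hθ, hθ'⟩ := pi_mul_div_mem_Ioc hk
  have hm : (m : ℝ) ≠ 0 := by have := (mem_Icc.1 hk); norm_cast; omega
  have hπ := pi_pos
  have hsin : 0 < sin (π * k / m) := sin_pos_of_pos_of_lt_pi hθ (by linarith)
  calc m ^ 2 / π ^ 2 * ((k : ℝ) ^ 2 + (l : ℝ) ^ 2)⁻¹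
        = 1 / ((π * k / m) ^ 2 + (π * l / m) ^ 2) := by
        rw [sq_add_sq_pi_mul_div m k l hm]
        field_simp
    _ ≤ gapTerm m k l :=
        one_div_sq_add_sq_le_one_div_one_sub_cos_sq_mul_cos_sq <|
          add_pos_of_pos_of_nonneg (pow_pos hsin 2) (sq_nonneg _)

lemma gapSum_le_four_mul (m : ℕ) :
    gapSum m ≤ 4 * ∑ k ∈ Icc 1 (m / 2), ∑ l ∈ Icc 1 (m / 2), gapTerm m k l := by
  have hrow (k : ℕ) :
      ∑ l ∈ Icc 1 (m - 1), gapTerm m k l ≤ 2 * ∑ l ∈ Icc 1 (m / 2), gapTerm m k l :=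
    sum_Icc_le_two_mul_sum_Icc_half (gapTerm_nonneg m k) fun l hl => gapTerm_sub_right m k hl
  calc gapSum m ≤ 2 * ∑ k ∈ Icc 1 (m / 2), ∑ l ∈ Icc 1 (m - 1), gapTerm m k l :=
        sum_Icc_le_two_mul_sum_Icc_half (fun k => sum_nonneg fun l _ => gapTerm_nonneg m k l)
          fun k hk => sum_congr rfl fun l _ => gapTerm_sub_left hk l
    _ ≤ 2 * ∑ k ∈ Icc 1 (m / 2), 2 * ∑ l ∈ Icc 1 (m / 2), gapTerm m k l := by
        gcongr with k; exact hrow k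
    _ = _ := by rw [← mul_sum]; ring

lemma gapSum_le (m : ℕ) : gapSum m ≤ 4 * m ^ 2 * (1 + log (m / 2 : ℕ)) := by
  calc gapSum m ≤ 4 * ∑ k ∈ Icc 1 (m / 2), ∑ l ∈ Icc 1 (m / 2), gapTerm m k l :=
        gapSum_le_four_mul m
    _ ≤ 4 * ∑ k ∈ Icc 1 (m / 2), ∑ l ∈ Icc 1 (m / 2),
          m ^ 2 / 2 * ((k : ℝ) ^ 2 + (l : ℝ) ^ 2)⁻¹ := by
        gcongr with k hk l hl; exact gapTerm_le hk hl
    _ = 2 * m ^ 2 * invSqNormSum (m / 2) := by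
        simp only [invSqNormSum, ← mul_sum]; ring
    _ ≤ 2 * m ^ 2 * (2 * (1 + log (m / 2 : ℕ))) := by
        gcongr; exact invSqNormSum_le _
    _ = 4 * m ^ 2 * (1 + log (m / 2 : ℕ)) := by ring

lemma le_gapSum (m : ℕ) : m ^ 2 / (2 * π ^ 2) * log ((m / 2 : ℕ) + 1) ≤ gapSum m := by
  have hπ := pi_pos
  calc m ^ 2 / (2 * π ^ 2) * log ((m / 2 : ℕ) + 1)
        ≤ m ^ 2 / π ^ 2 * invSqNormSum (m / 2) := by
        refine (mul_le_mul_of_nonneg_left (log_add_one_le_two_mul_invSqNormSum (m / 2))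
          (by positivity)).trans_eq ?_
        field_simp
    _ = ∑ k ∈ Icc 1 (m / 2), ∑ l ∈ Icc 1 (m / 2),
          m ^ 2 / π ^ 2 * ((k : ℝ) ^ 2 + (l : ℝ) ^ 2)⁻¹ := by
        simp only [invSqNormSum, mul_sum]
    _ ≤ ∑ k ∈ Icc 1 (m / 2), ∑ l ∈ Icc 1 (m / 2), gapTerm m k l := by
        gcongr with k hk l; exact le_gapTerm hk l
    _ ≤ gapSum m := by
        have hsub : Icc 1 (m / 2) ⊆ Icc 1 (m - 1) := Icc_subset_Icc le_rfl (by omega)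
        exact (sum_le_sum fun k _ => sum_le_sum_of_subset_of_nonneg hsub fun l _ _ =>
          gapTerm_nonneg m k l).trans <| sum_le_sum_of_subset_of_nonneg hsub fun k _ _ =>
            sum_nonneg fun l _ => gapTerm_nonneg m k l

lemma one_le_log_two_mul {m : ℕ} (hm : 2 ≤ m) : 1 ≤ log (2 * m) := by
  have : (4 : ℝ) ≤ 2 * m := by norm_cast; omega
  rw [le_log_iff_exp_le (by positivity)]
  linarith [exp_one_lt_d9]

lemma gapSum_le_sq_mul_log_sq {m : ℕ} (hm : 2 ≤ m) :
    gapSum m ≤ (2 * m : ℝ) ^ 2 * log ((2 * m : ℝ) ^ 2) := by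
  have hM : log (m / 2 : ℕ) ≤ log (2 * m) :=
    log_le_log (by norm_cast; omega) (by norm_cast; omega)
  have hlog := one_le_log_two_mul hm
  calc gapSum m ≤ 4 * m ^ 2 * (1 + log (m / 2 : ℕ)) := gapSum_le m
    _ ≤ 4 * m ^ 2 * (2 * log (2 * m)) := by gcongr; linarith
    _ = (2 * m : ℝ) ^ 2 * log ((2 * m : ℝ) ^ 2) := by rw [log_pow]; push_cast; ring

lemma sq_mul_log_sq_le_gapSum {m : ℕ} (hm : 4 ≤ m) :
    (2 * m : ℝ) ^ 2 * log ((2 * m : ℝ) ^ 2) ≤ 64 * π ^ 2 * gapSum m := by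
  have hpow : 2 * m ≤ (m / 2 + 1) ^ 4 := by
    have hcube : 4 ≤ (m / 2 + 1) ^ 3 :=
      le_trans (by norm_num) (Nat.pow_le_pow_left (by omega : 3 ≤ m / 2 + 1) 3)
    calc 2 * m ≤ 4 * (m / 2 + 1) := by omega
      _ ≤ (m / 2 + 1) ^ 3 * (m / 2 + 1) := Nat.mul_le_mul_right _ hcube
      _ = (m / 2 + 1) ^ 4 := by ring
  have hlog : log (2 * m) ≤ 4 * log ((m / 2 : ℕ) + 1) := by
    calc log (2 * m) ≤ log ((((m / 2 : ℕ) : ℝ) + 1) ^ 4) :=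
          log_le_log (by positivity) (by exact_mod_cast hpow)
      _ = 4 * log ((m / 2 : ℕ) + 1) := by rw [log_pow]; norm_num
  have hπ := pi_pos
  calc (2 * m : ℝ) ^ 2 * log ((2 * m : ℝ) ^ 2) = 8 * m ^ 2 * log (2 * m) := by
        rw [log_pow]; push_cast; ring
    _ ≤ 8 * m ^ 2 * (4 * log ((m / 2 : ℕ) + 1)) := by gcongr
    _ = 64 * π ^ 2 * (m ^ 2 / (2 * π ^ 2) * log ((m / 2 : ℕ) + 1)) := by field_simp; ring
    _ ≤ 64 * π ^ 2 * gapSum m := by gcongr; exact le_gapSum m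

lemma sum_eq_gapSum (m : ℕ) :
    ∑ k ∈ Icc 1 (2 * m / 2 - 1), ∑ l ∈ Icc 1 (2 * m / 2 - 1),
      1 / (1 - cos (2 * π * k / (2 * m : ℕ)) ^ 2 * cos (2 * π * l / (2 * m : ℕ)) ^ 2) =
        gapSum m := by
  have hangle (j : ℕ) : 2 * π * j / (2 * m : ℕ) = π * j / m := by
    push_cast
    rw [mul_assoc, mul_div_mul_left _ _ two_ne_zero]
  simp only [Nat.mul_div_cancel_left m two_pos, hangle]
  rfl

theorem stmt_3 :
    (fun n : ℕ => ∑ k ∈ Finset.Icc 1 (n / 2 - 1), ∑ l ∈ Finset.Icc 1 (n / 2 - 1),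
        1 / (1 - Real.cos (2 * Real.pi * k / n) ^ 2 * Real.cos (2 * Real.pi * l / n) ^ 2))
      =Θ[Filter.atTop ⊓ Filter.principal {n : ℕ | Even n}]
    (fun n : ℕ => ((n : ℝ) ^ 2) * Real.log ((n : ℝ) ^ 2)) := by
  have hhalf : ∀ᶠ n in atTop ⊓ 𝓟 {n : ℕ | Even n}, ∃ m, 4 ≤ m ∧ n = 2 * m := by
    rw [eventually_inf_principal]
    filter_upwards [eventually_ge_atTop 8] with n hn ⟨m, hm⟩
    exact ⟨m, by omega, by omega⟩
  refine ⟨.of_bound 1 ?_, .of_bound (64 * π ^ 2) ?_⟩ <;>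
    filter_upwards [hhalf] with n ⟨m, hm, hn⟩ <;>
    subst hn <;>
    have hupper := gapSum_le_sq_mul_log_sq (m := m) (by omega) <;>
    rw [sum_eq_gapSum, Nat.cast_mul, Nat.cast_two, norm_of_nonneg (gapSum_nonneg m),
      norm_of_nonneg ((gapSum_nonneg m).trans hupper)]
  · rwa [one_mul]
  · exact sq_mul_log_sq_le_gapSum hm
end

section
/- Let N = n² for an even positive integer n, and for 1 ≤ k < n/2 let k̃ = 2πk/n. Then the sum over 1 ≤ k ≤ n/2 − 1 of 1/(1 − cos²(k̃)) is Θ(N) as N → ∞. -/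
open Real Filter Finset Asymptotics

/-!
Write `n = 2N`; since `1 - cos² = sin²`, the summand becomes `1 / sin² (πk/N)`. Jordan's inequality
`sin θ ≥ (2/π) min(θ, π - θ)` bounds it by `N²/4 · (1/k² + 1/(N-k)²)`, and `∑ 1/k² ≤ 2` gives
`sum ≤ N²`. Conversely `sin x ≤ x` makes the single term `k = 1` at least `N²/π²`.
-/

lemma one_div_sq_le_one_div_sin_sq {x : ℝ} (hx : sin x ≠ 0) : 1 / x ^ 2 ≤ 1 / sin x ^ 2 :=
  one_div_le_one_div_of_le (by positivity) sin_sq_le_sq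

/-- Jordan's inequality applied on whichever half of `(0, π)` contains `θ`. -/
lemma one_div_sin_sq_le {θ : ℝ} (h₀ : 0 < θ) (hπ : θ < π) :
    1 / sin θ ^ 2 ≤ π ^ 2 / 4 * (1 / θ ^ 2 + 1 / (π - θ) ^ 2) := by
  suffices ∃ y, 0 < y ∧ y ≤ π / 2 ∧ sin y = sin θ ∧ 1 / y ^ 2 ≤ 1 / θ ^ 2 + 1 / (π - θ) ^ 2 by
    obtain ⟨y, hy₀, hyπ, hsin, hy⟩ := this
    have hjordan : 2 / π * y ≤ sin θ := hsin ▸ mul_le_sin hy₀.le hyπ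
    calc 1 / sin θ ^ 2 ≤ 1 / (2 / π * y) ^ 2 :=
          one_div_le_one_div_of_le (by positivity) (pow_le_pow_left₀ (by positivity) hjordan 2)
      _ = π ^ 2 / 4 * (1 / y ^ 2) := by field_simp; ring
      _ ≤ _ := by gcongr
  rcases le_or_gt θ (π / 2) with h | h
  · exact ⟨θ, h₀, h, rfl, le_add_of_nonneg_right (by positivity)⟩
  · exact ⟨π - θ, by linarith, by linarith, sin_pi_sub θ,
      le_add_of_nonneg_left (by positivity)⟩

lemma sum_Icc_one_div_sq_le_two (K : ℕ) : ∑ k ∈ Icc 1 K, 1 / (k : ℝ) ^ 2 ≤ 2 := by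
  have hIcc : Icc 1 K = Ioo 0 (K + 1) := by ext; simp only [mem_Icc, mem_Ioo]; omega
  simpa [hIcc] using sum_Ioo_inv_sq_le (α := ℝ) 0 (K + 1)

lemma sum_Icc_one_div_sub_sq (N : ℕ) :
    ∑ k ∈ Icc 1 (N - 1), 1 / ((N : ℝ) - k) ^ 2 = ∑ k ∈ Icc 1 (N - 1), 1 / (k : ℝ) ^ 2 := by
  refine sum_nbij' (N - ·) (N - ·) ?_ ?_ ?_ ?_ ?_ <;> simp only [mem_Icc]
  · intro k hk; omega
  · intro k hk; omega
  · intro k hk; omega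
  · intro k hk; omega
  · intro k hk; rw [Nat.cast_sub (by omega)]

lemma sum_one_div_sin_sq_le (N : ℕ) :
    ∑ k ∈ Icc 1 (N - 1), 1 / sin (π * k / N) ^ 2 ≤ (N : ℝ) ^ 2 := by
  have hterm : ∀ k ∈ Icc 1 (N - 1), 1 / sin (π * k / N) ^ 2 ≤
      (N : ℝ) ^ 2 / 4 * (1 / (k : ℝ) ^ 2 + 1 / ((N : ℝ) - k) ^ 2) := by
    intro k hk
    rw [mem_Icc] at hk
    have hk₀ : (0 : ℝ) < k := by exact_mod_cast hk.1
    have hkN : (k : ℝ) < N := by exact_mod_cast (show k < N by omega)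
    have hN : (0 : ℝ) < N := hk₀.trans hkN
    have hsub : π - π * k / N = π * (N - k) / N := by field_simp
    calc 1 / sin (π * k / N) ^ 2 ≤ π ^ 2 / 4 * (1 / (π * k / N) ^ 2 + 1 / (π - π * k / N) ^ 2) :=
          one_div_sin_sq_le (by positivity) (by rw [div_lt_iff₀ hN]; nlinarith [pi_pos])
      _ = _ := by
          rw [hsub]
          have : (N : ℝ) - k ≠ 0 := by linarith
          field_simp
  calc _ ≤ ∑ k ∈ Icc 1 (N - 1), (N : ℝ) ^ 2 / 4 * (1 / (k : ℝ) ^ 2 + 1 / ((N : ℝ) - k) ^ 2) :=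
        sum_le_sum hterm
    _ = (N : ℝ) ^ 2 / 4 * (2 * ∑ k ∈ Icc 1 (N - 1), 1 / (k : ℝ) ^ 2) := by
        rw [← mul_sum, sum_add_distrib, sum_Icc_one_div_sub_sq]; ring
    _ ≤ (N : ℝ) ^ 2 / 4 * (2 * 2) := by gcongr; exact sum_Icc_one_div_sq_le_two _
    _ = (N : ℝ) ^ 2 := by ring

lemma sq_div_pi_sq_le_sum_one_div_sin_sq {N : ℕ} (hN : 2 ≤ N) :
    (N : ℝ) ^ 2 / π ^ 2 ≤ ∑ k ∈ Icc 1 (N - 1), 1 / sin (π * k / N) ^ 2 := by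
  have hN' : (2 : ℝ) ≤ N := by exact_mod_cast hN
  have hsin : sin (π * (1 : ℕ) / N) ≠ 0 := by
    refine (sin_pos_of_pos_of_lt_pi (by positivity) ?_).ne'
    rw [Nat.cast_one, mul_one, div_lt_iff₀ (by positivity)]
    nlinarith [pi_pos]
  calc (N : ℝ) ^ 2 / π ^ 2 = 1 / (π * (1 : ℕ) / N) ^ 2 := by push_cast; field_simp
    _ ≤ 1 / sin (π * (1 : ℕ) / N) ^ 2 := one_div_sq_le_one_div_sin_sq hsin
    _ ≤ _ := single_le_sum (f := fun k : ℕ => 1 / sin (π * k / N) ^ 2)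
          (fun _ _ => by positivity) (by rw [mem_Icc]; omega)

lemma sum_one_div_one_sub_cos_sq_two_mul (N : ℕ) :
    ∑ k ∈ Icc 1 (2 * N / 2 - 1), 1 / (1 - cos (2 * π * k / (2 * N : ℕ)) ^ 2) =
      ∑ k ∈ Icc 1 (N - 1), 1 / sin (π * k / N) ^ 2 := by
  rw [Nat.mul_div_cancel_left N two_pos]
  refine sum_congr rfl fun k _ => ?_
  rw [← sin_sq, Nat.cast_mul, Nat.cast_two, mul_assoc, mul_div_mul_left _ _ two_ne_zero]

theorem stmt_4 :
    (fun n : ℕ => ∑ k ∈ Finset.Icc 1 (n / 2 - 1),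
        1 / (1 - Real.cos (2 * Real.pi * k / n) ^ 2))
      =Θ[Filter.atTop ⊓ Filter.principal {n : ℕ | Even n}]
    (fun n : ℕ => ((n : ℝ) ^ 2)) := by
  set f := fun n : ℕ => ∑ k ∈ Finset.Icc 1 (n / 2 - 1),
    1 / (1 - Real.cos (2 * Real.pi * k / n) ^ 2)
  have hbounds : ∀ᶠ n : ℕ in atTop ⊓ 𝓟 {n : ℕ | Even n},
      (n : ℝ) ^ 2 / (4 * π ^ 2) ≤ f n ∧ f n ≤ (n : ℝ) ^ 2 / 4 := by
    rw [eventually_inf_principal]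
    filter_upwards [eventually_ge_atTop 4] with n hn hn_even
    obtain ⟨N, rfl⟩ := hn_even
    rw [← two_mul] at hn ⊢
    simp only [f, sum_one_div_one_sub_cos_sq_two_mul]
    push_cast
    constructor
    · calc (2 * N : ℝ) ^ 2 / (4 * π ^ 2) = (N : ℝ) ^ 2 / π ^ 2 := by field_simp; ring
        _ ≤ _ := sq_div_pi_sq_le_sum_one_div_sin_sq (by omega)
    · calc _ ≤ (N : ℝ) ^ 2 := sum_one_div_sin_sq_le N
        _ = (2 * N : ℝ) ^ 2 / 4 := by ring
  have hf_nonneg : ∀ n, 0 ≤ f n := fun n => sum_nonneg fun k _ => by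
    rw [← sin_sq]; positivity
  refine ⟨IsBigO.of_bound (1 / 4) ?_, IsBigO.of_bound (4 * π ^ 2) ?_⟩ <;>
    filter_upwards [hbounds] with n ⟨hlow, hup⟩ <;>
    simp only [norm_of_nonneg (hf_nonneg n), norm_pow, RCLike.norm_natCast]
  · linarith
  · rwa [div_le_iff₀' (by positivity)] at hlow
end

section
/- Let N = n² for an even positive integer n, and for 1 ≤ k < n/2 let k̃ = 2πk/n. Then the sum over 1 ≤ k ≤ n/2 − 1 of 1/(1 − cos²(k̃))² is Θ(N²) as N → ∞. -/
open Real Filter Finset Asymptotics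

/-!
Write `n = 2h`, so that the summand is `1 / sin (π k / h) ^ 4` for `1 ≤ k ≤ h - 1`. Jordan's
inequality on both halves of `[0, π]` gives `sin (π k / h) ≥ 2 min (k, h - k) / h`, so the sum is
at most `(h / 2) ^ 4` times twice a partial sum of `∑ 1 / k ^ 4 < ∞`. Conversely `sin x ≤ x` makes
the single term `k = 1` at least `(h / π) ^ 4`.
-/

lemma Real.two_div_pi_mul_min_le_sin {x : ℝ} (hx₀ : 0 ≤ x) (hxπ : x ≤ π) :
    2 / π * min x (π - x) ≤ sin x := by
  have hπ : 0 ≤ 2 / π := by positivity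
  rcases le_total x (π / 2) with hx | hx
  · exact (mul_le_mul_of_nonneg_left (min_le_left _ _) hπ).trans (mul_le_sin hx₀ hx)
  · rw [← sin_pi_sub]
    exact (mul_le_mul_of_nonneg_left (min_le_right _ _) hπ).trans
      (mul_le_sin (by linarith) (by linarith))

lemma Finset.sum_Icc_one_sub_reflect {M : Type*} [AddCommMonoid M] (f : ℕ → M) (h : ℕ) :
    ∑ k ∈ Icc 1 (h - 1), f (h - k) = ∑ k ∈ Icc 1 (h - 1), f k :=
  sum_nbij' (fun k => h - k) (fun k => h - k)
    (fun k hk => by simp only [mem_Icc] at hk ⊢; omega)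
    (fun k hk => by simp only [mem_Icc] at hk ⊢; omega)
    (fun k hk => by simp only [mem_Icc] at hk; omega)
    (fun k hk => by simp only [mem_Icc] at hk; omega)
    fun _ _ => rfl

lemma one_div_sin_pi_mul_div_pow_four_le {h k : ℕ} (hk₀ : 0 < k) (hkh : k < h) :
    1 / sin (π * k / h) ^ 4 ≤
      ((h : ℝ) / 2) ^ 4 * (1 / (k : ℝ) ^ 4 + 1 / ((h - k : ℕ) : ℝ) ^ 4) := by
  set m : ℕ := min k (h - k) with hm
  have hm₀ : (0 : ℝ) < m := by rw [hm]; exact_mod_cast (by omega : 0 < min k (h - k))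
  have hh₀ : (0 : ℝ) < h := by exact_mod_cast hk₀.trans hkh
  have hsin : 2 * (m : ℝ) / h ≤ sin (π * k / h) := by
    have hmin : min (π * k / h) (π - π * k / h) = π / h * m := by
      rw [hm, Nat.cast_min, Nat.cast_sub hkh.le, mul_min_of_nonneg _ _ (by positivity)]
      congr 1 <;> field_simp
    have hkh' : (k : ℝ) ≤ h := by exact_mod_cast hkh.le
    calc 2 * (m : ℝ) / h = 2 / π * (π / h * m) := by field_simp
      _ = 2 / π * min (π * k / h) (π - π * k / h) := by rw [hmin]
      _ ≤ sin (π * k / h) := two_div_pi_mul_min_le_sin (by positivity)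
          (by rw [div_le_iff₀ hh₀]; nlinarith [pi_pos])
  have hmin : 1 / (m : ℝ) ^ 4 ≤ 1 / (k : ℝ) ^ 4 + 1 / ((h - k : ℕ) : ℝ) ^ 4 := by
    rcases min_choice k (h - k) with hc | hc <;> rw [hm, hc]
    · exact le_add_of_nonneg_right (by positivity)
    · exact le_add_of_nonneg_left (by positivity)
  calc 1 / sin (π * k / h) ^ 4 ≤ 1 / (2 * (m : ℝ) / h) ^ 4 :=
        one_div_le_one_div_of_le (by positivity) (pow_le_pow_left₀ (by positivity) hsin 4)
    _ = ((h : ℝ) / 2) ^ 4 * (1 / (m : ℝ) ^ 4) := by field_simp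
    _ ≤ _ := mul_le_mul_of_nonneg_left hmin (by positivity)

lemma sum_one_div_sin_pi_mul_div_pow_four_le (h : ℕ) :
    ∑ k ∈ Icc 1 (h - 1), 1 / sin (π * k / h) ^ 4 ≤
      (∑' k : ℕ, 1 / (k : ℝ) ^ 4) / 8 * (h : ℝ) ^ 4 := by
  have hpartial : ∑ k ∈ Icc 1 (h - 1), 1 / (k : ℝ) ^ 4 ≤ ∑' k : ℕ, 1 / (k : ℝ) ^ 4 :=
    (summable_one_div_nat_pow.mpr (by norm_num)).sum_le_tsum _ (fun _ _ => by positivity)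
  calc ∑ k ∈ Icc 1 (h - 1), 1 / sin (π * k / h) ^ 4
      ≤ ∑ k ∈ Icc 1 (h - 1), ((h : ℝ) / 2) ^ 4 * (1 / (k : ℝ) ^ 4 + 1 / ((h - k : ℕ) : ℝ) ^ 4) :=
        sum_le_sum fun k hk => by
          rw [mem_Icc] at hk
          exact one_div_sin_pi_mul_div_pow_four_le (by omega) (by omega)
    _ = ((h : ℝ) / 2) ^ 4 * (2 * ∑ k ∈ Icc 1 (h - 1), 1 / (k : ℝ) ^ 4) := by
        rw [← mul_sum, sum_add_distrib,
          sum_Icc_one_sub_reflect (fun j => 1 / (j : ℝ) ^ 4) h, two_mul]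
    _ ≤ ((h : ℝ) / 2) ^ 4 * (2 * ∑' k : ℕ, 1 / (k : ℝ) ^ 4) := by gcongr
    _ = _ := by ring

lemma pow_four_div_pi_pow_four_le_sum_one_div_sin_pi_mul_div_pow_four {h : ℕ} (hh : 2 ≤ h) :
    (h : ℝ) ^ 4 / π ^ 4 ≤ ∑ k ∈ Icc 1 (h - 1), 1 / sin (π * k / h) ^ 4 := by
  have hh' : (2 : ℝ) ≤ h := by exact_mod_cast hh
  have hsin₀ : 0 < sin (π / h) :=
    sin_pos_of_pos_of_lt_pi (by positivity) (div_lt_self pi_pos (by linarith))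
  calc (h : ℝ) ^ 4 / π ^ 4 = 1 / (π / h) ^ 4 := by field_simp
    _ ≤ 1 / sin (π / h) ^ 4 :=
        one_div_le_one_div_of_le (by positivity)
          (pow_le_pow_left₀ hsin₀.le (sin_le (by positivity)) 4)
    _ = 1 / sin (π * (1 : ℕ) / h) ^ 4 := by rw [Nat.cast_one, mul_one]
    _ ≤ _ := single_le_sum (f := fun k : ℕ => 1 / sin (π * k / h) ^ 4)
        (fun _ _ => by positivity) (mem_Icc.mpr ⟨le_rfl, by omega⟩)

lemma sum_one_div_one_sub_cos_sq_sq_eq (h : ℕ) :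
    ∑ k ∈ Icc 1 ((h + h) / 2 - 1), 1 / (1 - cos (2 * π * k / (h + h : ℕ)) ^ 2) ^ 2
      = ∑ k ∈ Icc 1 (h - 1), 1 / sin (π * k / h) ^ 4 := by
  rw [show (h + h) / 2 = h by omega]
  refine sum_congr rfl fun k _ => ?_
  rw [← sin_sq, ← pow_mul, Nat.cast_add, ← two_mul, mul_assoc, mul_div_mul_left _ _ two_ne_zero]

theorem stmt_5 :
    (fun n : ℕ => ∑ k ∈ Finset.Icc 1 (n / 2 - 1),
        1 / (1 - Real.cos (2 * Real.pi * k / n) ^ 2) ^ 2)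
      =Θ[Filter.atTop ⊓ Filter.principal {n : ℕ | Even n}]
    (fun n : ℕ => (((n : ℝ) ^ 2) ^ 2)) := by
  have hnorm : ∀ h : ℕ, ‖(((h + h : ℕ) : ℝ) ^ 2) ^ 2‖ = 16 * (h : ℝ) ^ 4 := fun h => by
    rw [norm_of_nonneg (by positivity)]; push_cast; ring
  have hsum_nonneg : ∀ h : ℕ, 0 ≤ ∑ k ∈ Icc 1 (h - 1), 1 / sin (π * k / h) ^ 4 :=
    fun h => sum_nonneg fun _ _ => by positivity
  constructor
  · refine IsBigO.of_bound (∑' k : ℕ, 1 / (k : ℝ) ^ 4) ?_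
    rw [eventually_inf_principal]
    filter_upwards with n hn
    obtain ⟨h, rfl⟩ := hn
    rw [sum_one_div_one_sub_cos_sq_sq_eq, norm_of_nonneg (hsum_nonneg h), hnorm]
    have hC : 0 ≤ (∑' k : ℕ, 1 / (k : ℝ) ^ 4) * (h : ℝ) ^ 4 :=
      mul_nonneg (tsum_nonneg fun _ => by positivity) (by positivity)
    linarith [sum_one_div_sin_pi_mul_div_pow_four_le h]
  · refine IsBigO.of_bound (16 * π ^ 4) ?_
    rw [eventually_inf_principal]
    filter_upwards [eventually_ge_atTop 4] with n hn hev
    obtain ⟨h, rfl⟩ := hev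
    rw [sum_one_div_one_sub_cos_sq_sq_eq, norm_of_nonneg (hsum_nonneg h), hnorm]
    have hlower :=
      pow_four_div_pi_pow_four_le_sum_one_div_sin_pi_mul_div_pow_four (h := h) (by omega)
    rw [div_le_iff₀ (by positivity)] at hlower
    linarith
end
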